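/- arXiv:1906.11593 — 10 statements merged into one kernel-verified Lean document; each statement's English description precedes it below -/
import Mathlib

section
/- Let v : ℤ³ → ℂ be nowhere zero and satisfy the discrete modified KP equation a₁(v(n+1,m+1,h)/v(n,m+1,h) − v(n+1,m,h+1)/v(n,m,h+1)) + a₂(v(n,m+1,h+1)/v(n,m,h+1) − v(n+1,m+1,h)/v(n+1,m,h)) + a₃(v(n+1,m,h+1)/v(n+1,m,h) − v(n,m+1,h+1)/v(n,m+1,h)) = 0. If u : ℤ³ → ℂ satisfies the Miura relations a₁ − a₂ + u(n,m+1,h) − u(n+1,m,h) = a₁ v(n+1,m,h)/v(n,m,h) − a₂ v(n,m+1,h)/v(n,m,h), a₂ − a₃ + u(n,m,h+1) − u(n,m+1,h) = a₂ v(n,m+1,h)/v(n,m,h) − a₃ v(n,m,h+1)/v(n,m,h), and a₁ − a₃ + u(n,m,h+1) − u(n+1,m,h) = a₁ v(n+1,m,h)/v(n,m,h) − a₃ v(n,m,h+1)/v(n,m,h) for all n,m,h, then u satisfies the discrete KP equation (a₁−a₃+u(n,m+1,h+1)−u(n+1,m+1,h))(a₂−a₃+u(n,m,h+1)−u(n,m+1,h))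 = (a₂−a₃+u(n+1,m,h+1)−u(n+1,m+1,h))(a₁−a₃+u(n,m,h+1)−u(n+1,m,h)). -/
/-!
The Miura maps turn each factor of the discrete KP equation into a ratio of values of `v`.
After this substitution, the difference of the two sides of the KP equation at `(n, m, h)` is
`-a₃ v(n, m, h+1) / v(n, m, h)` times the left-hand side of the modified KP equation there,
which vanishes.
-/

theorem kp_sub_eq_mul_mkp {K : Type*} [Field K] (a₁ a₂ a₃ v000 v100 v010 v001 v110 v101 v011 : K)
    (h000 : v000 ≠ 0) (h100 : v100 ≠ 0) (h010 : v010 ≠ 0) (h001 : v001 ≠ 0) :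
    (a₁ * v110 / v010 - a₃ * v011 / v010) * (a₂ * v010 / v000 - a₃ * v001 / v000)
        - (a₂ * v110 / v100 - a₃ * v101 / v100) * (a₁ * v100 / v000 - a₃ * v001 / v000)
      = -(a₃ * v001 / v000) *
          (a₁ * (v110 / v010 - v101 / v001) + a₂ * (v011 / v001 - v110 / v100)
            + a₃ * (v101 / v100 - v011 / v010)) := by
  field_simp
  ring

theorem stmt_2_general (a₁ a₂ a₃ : ℂ) (v u : ℤ → ℤ → ℤ → ℂ)
    (hv0 : ∀ n m h : ℤ, v n m h ≠ 0)
    (hmKP : ∀ n m h : ℤ,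
      a₁ * (v (n+1) (m+1) h / v n (m+1) h - v (n+1) m (h+1) / v n m (h+1))
        + a₂ * (v n (m+1) (h+1) / v n m (h+1) - v (n+1) (m+1) h / v (n+1) m h)
        + a₃ * (v (n+1) m (h+1) / v (n+1) m h - v n (m+1) (h+1) / v n (m+1) h) = 0)
    (hM2 : ∀ n m h : ℤ, a₂ - a₃ + u n m (h+1) - u n (m+1) h
      = a₂ * v n (m+1) h / v n m h - a₃ * v n m (h+1) / v n m h)
    (hM3 : ∀ n m h : ℤ, a₁ - a₃ + u n m (h+1) - u (n+1) m h
      = a₁ * v (n+1) m h / v n m h - a₃ * v n m (h+1) / v n m h) :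
    ∀ n m h : ℤ,
      (a₁ - a₃ + u n (m+1) (h+1) - u (n+1) (m+1) h)
          * (a₂ - a₃ + u n m (h+1) - u n (m+1) h)
        = (a₂ - a₃ + u (n+1) m (h+1) - u (n+1) (m+1) h)
          * (a₁ - a₃ + u n m (h+1) - u (n+1) m h) := by
  intro n m h
  rw [hM3 n (m+1) h, hM2 n m h, hM2 (n+1) m h, hM3 n m h, ← sub_eq_zero,
    kp_sub_eq_mul_mkp _ _ _ _ _ _ _ _ _ _ (hv0 n m h) (hv0 (n+1) m h) (hv0 n (m+1) h)
      (hv0 n m (h+1)), hmKP n m h, mul_zero]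

/-- If a nowhere-zero `v` satisfies the discrete modified KP equation and `u` is related
to `v` by the discrete Miura maps, then `u` satisfies the discrete KP equation. -/
theorem stmt_2 (a₁ a₂ a₃ : ℂ) (v u : ℤ → ℤ → ℤ → ℂ)
    (hv0 : ∀ n m h : ℤ, v n m h ≠ 0)
    (hmKP : ∀ n m h : ℤ,
      a₁ * (v (n+1) (m+1) h / v n (m+1) h - v (n+1) m (h+1) / v n m (h+1))
        + a₂ * (v n (m+1) (h+1) / v n m (h+1) - v (n+1) (m+1) h / v (n+1) m h)
        + a₃ * (v (n+1) m (h+1) / v (n+1) m h - v n (m+1) (h+1) / v n (m+1) h) = 0)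
    (hM1 : ∀ n m h : ℤ, a₁ - a₂ + u n (m+1) h - u (n+1) m h
      = a₁ * v (n+1) m h / v n m h - a₂ * v n (m+1) h / v n m h)
    (hM2 : ∀ n m h : ℤ, a₂ - a₃ + u n m (h+1) - u n (m+1) h
      = a₂ * v n (m+1) h / v n m h - a₃ * v n m (h+1) / v n m h)
    (hM3 : ∀ n m h : ℤ, a₁ - a₃ + u n m (h+1) - u (n+1) m h
      = a₁ * v (n+1) m h / v n m h - a₃ * v n m (h+1) / v n m h) :
    ∀ n m h : ℤ,
      (a₁ - a₃ + u n (m+1) (h+1) - u (n+1) (m+1) h)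
          * (a₂ - a₃ + u n m (h+1) - u n (m+1) h)
        = (a₂ - a₃ + u (n+1) m (h+1) - u (n+1) (m+1) h)
          * (a₁ - a₃ + u n m (h+1) - u (n+1) m h) :=
  stmt_2_general a₁ a₂ a₃ v u hv0 hmKP hM2 hM3
end

section
/- Let 𝒩 ≥ 2 and suppose τ : ℤ² × (ℤ/𝒩ℤ) → ℂ is nowhere zero and satisfies, for every h, a₁(τ(n,m,h+1)τ(n+1,m+1,h) − τ(n,m+1,h)τ(n+1,m,h+1)) = a₂(τ(n,m,h+1)τ(n+1,m+1,h) − τ(n+1,m,h)τ(n,m+1,h+1)). Define v(n,m,h) = τ(n,m,h+1)/τ(n,m,h). Then v satisfies the discrete modified Gel'fand–Dikii equation a₁(v(n+1,m+1,h)/v(n,m+1,h) − v(n+1,m,h+1)/v(n,m,h+1)) = a₂(v(n+1,m+1,h)/v(n+1,m,h) − v(n,m+1,h+1)/v(n,m,h+1)) for every h, and moreover the product of v(n,m,h) over all h ∈ ℤ/𝒩ℤ equals 1. -/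
/-!
Divide the bilinear equation at level `h` by its leading term `τ(n,m,h+1) τ(n+1,m+1,h)`: it becomes
`a₁ (1 - R A) = a₂ (1 - R B)`, where `A`, `B` are the two `v`-ratios of the modified equation at
level `h` and `R` is the cross ratio of `τ` at level `h+1`. The equation at level `h+1`, divided in
the same way, gives `a₁ (1 - R A') = a₂ (1 - R B')` with the same `R` and the other two `v`-ratios.
Subtracting eliminates `a₁ - a₂`, and cancelling `R` leaves the modified equation. The product of
the `v(n,m,h)` telescopes because `h ↦ h + 1` permutes `ℤ/𝒩ℤ`.
-/

theorem Fintype.prod_div_comp_add_right_eq_one {G K : Type*} [AddGroup G] [Fintype G]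
    [CommGroupWithZero K] (f : G → K) (hf : ∀ g, f g ≠ 0) (c : G) :
    ∏ g, f (g + c) / f g = 1 := by
  rw [Finset.prod_div_distrib,
    Fintype.prod_equiv (Equiv.addRight c) (fun g => f (g + c)) f fun _ => rfl]
  exact div_self (Finset.prod_ne_zero_iff.mpr fun g _ => hf g)

theorem mul_sub_eq_mul_sub_of_mul_one_sub {K : Type*} [Field K] {a₁ a₂ r x x' y y' : K}
    (hr : r ≠ 0) (h : a₁ * (1 - r * x) = a₂ * (1 - r * y))
    (h' : a₁ * (1 - r * x') = a₂ * (1 - r * y')) :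
    a₁ * (x - x') = a₂ * (y - y') := by
  apply mul_left_cancel₀ hr
  linear_combination h' - h

theorem mul_one_sub_div_eq_of_mul_sub_eq {K : Type*} [Field K] {a₁ a₂ p x y : K} (hp : p ≠ 0)
    (h : a₁ * (p - x) = a₂ * (p - y)) : a₁ * (1 - x / p) = a₂ * (1 - y / p) := by
  rw [one_sub_div hp, one_sub_div hp, mul_div_assoc', mul_div_assoc', h]

namespace DiscreteGelfandDikii

variable {G K : Type*} [Field K]

def crossRatio (τ : ℤ → ℤ → G → K) (n m : ℤ) (k : G) : K :=
  τ (n+1) m k * τ n (m+1) k / (τ n m k * τ (n+1) (m+1) k)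

theorem crossRatio_ne_zero {τ : ℤ → ℤ → G → K} (hτ0 : ∀ n m h, τ n m h ≠ 0) (n m : ℤ)
    (k : G) : crossRatio τ n m k ≠ 0 := by
  simp [crossRatio, hτ0]

section Bilinear

variable [Add G] [One G] {a₁ a₂ : K} {τ : ℤ → ℤ → G → K} {n m : ℤ} {h : G}

theorem mul_one_sub_crossRatio_mul_eq_of_bilinear (hτ0 : ∀ n m h, τ n m h ≠ 0)
    (hbil : a₁ * (τ n m (h+1) * τ (n+1) (m+1) h - τ n (m+1) h * τ (n+1) m (h+1))
        = a₂ * (τ n m (h+1) * τ (n+1) (m+1) h - τ (n+1) m h * τ n (m+1) (h+1))) :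
    a₁ * (1 - crossRatio τ n m (h+1) *
        ((τ (n+1) (m+1) (h+1) / τ (n+1) (m+1) h) / (τ n (m+1) (h+1) / τ n (m+1) h)))
      = a₂ * (1 - crossRatio τ n m (h+1) *
        ((τ (n+1) (m+1) (h+1) / τ (n+1) (m+1) h) / (τ (n+1) m (h+1) / τ (n+1) m h))) := by
  convert mul_one_sub_div_eq_of_mul_sub_eq
      (mul_ne_zero (hτ0 n m (h+1)) (hτ0 (n+1) (m+1) h)) hbil using 3 <;>
  · unfold crossRatio
    field_simp [hτ0]

theorem mul_one_sub_crossRatio_mul_eq_of_bilinear_succ (hτ0 : ∀ n m h, τ n m h ≠ 0)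
    (hbil : a₁ * (τ n m (h+1+1) * τ (n+1) (m+1) (h+1) - τ n (m+1) (h+1) * τ (n+1) m (h+1+1))
        = a₂ * (τ n m (h+1+1) * τ (n+1) (m+1) (h+1) - τ (n+1) m (h+1) * τ n (m+1) (h+1+1))) :
    a₁ * (1 - crossRatio τ n m (h+1) *
        ((τ (n+1) m (h+1+1) / τ (n+1) m (h+1)) / (τ n m (h+1+1) / τ n m (h+1))))
      = a₂ * (1 - crossRatio τ n m (h+1) *
        ((τ n (m+1) (h+1+1) / τ n (m+1) (h+1)) / (τ n m (h+1+1) / τ n m (h+1)))) := by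
  convert mul_one_sub_div_eq_of_mul_sub_eq
      (mul_ne_zero (hτ0 n m (h+1+1)) (hτ0 (n+1) (m+1) (h+1))) hbil using 3 <;>
  · unfold crossRatio
    field_simp [hτ0]

end Bilinear

end DiscreteGelfandDikii

open DiscreteGelfandDikii in
theorem stmt_3_general (N : ℕ) [NeZero N] (a₁ a₂ : ℂ)
    (τ : ℤ → ℤ → ZMod N → ℂ)
    (hτ0 : ∀ (n m : ℤ) (h : ZMod N), τ n m h ≠ 0)
    (hbil : ∀ (n m : ℤ) (h : ZMod N),
      a₁ * (τ n m (h+1) * τ (n+1) (m+1) h - τ n (m+1) h * τ (n+1) m (h+1))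
        = a₂ * (τ n m (h+1) * τ (n+1) (m+1) h - τ (n+1) m h * τ n (m+1) (h+1)))
    (v : ℤ → ℤ → ZMod N → ℂ)
    (hv : ∀ (n m : ℤ) (h : ZMod N), v n m h = τ n m (h+1) / τ n m h) :
    (∀ (n m : ℤ) (h : ZMod N),
      a₁ * (v (n+1) (m+1) h / v n (m+1) h - v (n+1) m (h+1) / v n m (h+1))
        = a₂ * (v (n+1) (m+1) h / v (n+1) m h - v n (m+1) (h+1) / v n m (h+1)))
    ∧ (∀ n m : ℤ, (∏ h : ZMod N, v n m h) = 1) := by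
  obtain rfl : v = fun n m h => τ n m (h+1) / τ n m h := funext₃ hv
  refine ⟨fun n m h => ?_, fun n m => ?_⟩
  · exact mul_sub_eq_mul_sub_of_mul_one_sub (crossRatio_ne_zero hτ0 n m (h+1))
      (mul_one_sub_crossRatio_mul_eq_of_bilinear hτ0 (hbil n m h))
      (mul_one_sub_crossRatio_mul_eq_of_bilinear_succ hτ0 (hbil n m (h+1)))
  · exact Fintype.prod_div_comp_add_right_eq_one (τ n m) (hτ0 n m) 1

/-- The quotient potential `v = τ(·,·,h+1)/τ(·,·,h)` of a nowhere-zero solution of the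
discrete bilinear Gel'fand–Dikii system satisfies the discrete modified Gel'fand–Dikii
equation, and the product of its components equals 1. -/
theorem stmt_3 (N : ℕ) [NeZero N] (hN : 2 ≤ N) (a₁ a₂ : ℂ)
    (τ : ℤ → ℤ → ZMod N → ℂ)
    (hτ0 : ∀ (n m : ℤ) (h : ZMod N), τ n m h ≠ 0)
    (hbil : ∀ (n m : ℤ) (h : ZMod N),
      a₁ * (τ n m (h+1) * τ (n+1) (m+1) h - τ n (m+1) h * τ (n+1) m (h+1))
        = a₂ * (τ n m (h+1) * τ (n+1) (m+1) h - τ (n+1) m h * τ n (m+1) (h+1)))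
    (v : ℤ → ℤ → ZMod N → ℂ)
    (hv : ∀ (n m : ℤ) (h : ZMod N), v n m h = τ n m (h+1) / τ n m h) :
    (∀ (n m : ℤ) (h : ZMod N),
      a₁ * (v (n+1) (m+1) h / v n (m+1) h - v (n+1) m (h+1) / v n m (h+1))
        = a₂ * (v (n+1) (m+1) h / v (n+1) m h - v n (m+1) (h+1) / v n m (h+1)))
    ∧ (∀ n m : ℤ, (∏ h : ZMod N, v n m h) = 1) :=
  stmt_3_general N a₁ a₂ τ hτ0 hbil v hv
end

section
/- Let 𝒩 ≥ 2, a₁, a₂ ∈ ℂ, and u : ℤ² × (ℤ/𝒩ℤ) → ℂ, and suppose there exists a nowhere-zero τ : ℤ² × (ℤ/𝒩ℤ) → ℂ such that a₁ + u(n,m,h+1) − u(n+1,m,h) = a₁ τ(n+1,m,h+1)τ(n,m,h)/(τ(n+1,m,h)τ(n,m,h+1)) and a₂ + u(n,m,h+1) − u(n,m+1,h) = a₂ τ(n,m+1,h+1)τ(n,m,h)/(τ(n,m+1,h)τ(n,m,h+1)) for all n, m, h. Then the first integrals hold: ∏_{h ∈ ℤ/𝒩ℤ} (a₁ + u(n,m,h+1)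 − u(n+1,m,h)) = a₁^𝒩 and ∏_{h ∈ ℤ/𝒩ℤ} (a₂ + u(n,m,h+1) − u(n,m+1,h)) = a₂^𝒩 for all n, m. -/
/-! Through the Miura maps each factor is `a` times a quotient of two ratios `τ(h+1)/τ(h)`.
Since `h ↦ h + 1` permutes `ZMod N`, each such ratio has product `1` over the cyclic index,
leaving `a ^ N`. -/

open Finset

section ShiftRatio

variable {G K : Type*} [AddGroup G] [Fintype G] [Field K]

theorem prod_shift_div_self (f : G → K) (hf : ∀ h, f h ≠ 0) (c : G) :
    ∏ h, f (h + c) / f h = 1 := by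
  rw [prod_div_distrib, Fintype.prod_equiv (Equiv.addRight c) (fun h => f (h + c)) f fun _ => rfl]
  exact div_self (prod_ne_zero_iff.2 fun h _ => hf h)

theorem prod_const_mul_gauge_ratio (a : K) (f g : G → K) (hf : ∀ h, f h ≠ 0)
    (hg : ∀ h, g h ≠ 0) (c : G) :
    ∏ h, a * (f (h + c) * g h) / (f h * g (h + c)) = a ^ Fintype.card G := by
  have factor_eq : ∀ h, a * (f (h + c) * g h) / (f h * g (h + c))
      = a * (f (h + c) / f h) / (g (h + c) / g h) := fun h => by rw [div_div_eq_mul_div]; ring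
  simp only [factor_eq, prod_div_distrib, prod_mul_distrib, prod_const, card_univ,
    prod_shift_div_self f hf, prod_shift_div_self g hg, mul_one, div_one]

end ShiftRatio

theorem stmt_4_general (N : ℕ) [NeZero N] (a₁ a₂ : ℂ)
    (u : ℤ → ℤ → ZMod N → ℂ)
    (hτ : ∃ τ : ℤ → ℤ → ZMod N → ℂ,
      (∀ (n m : ℤ) (h : ZMod N), τ n m h ≠ 0) ∧
      (∀ (n m : ℤ) (h : ZMod N),
        a₁ + u n m (h+1) - u (n+1) m h
          = a₁ * (τ (n+1) m (h+1) * τ n m h) / (τ (n+1) m h * τ n m (h+1))) ∧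
      (∀ (n m : ℤ) (h : ZMod N),
        a₂ + u n m (h+1) - u n (m+1) h
          = a₂ * (τ n (m+1) (h+1) * τ n m h) / (τ n (m+1) h * τ n m (h+1)))) :
    ∀ n m : ℤ,
      (∏ h : ZMod N, (a₁ + u n m (h+1) - u (n+1) m h)) = a₁ ^ N ∧
      (∏ h : ZMod N, (a₂ + u n m (h+1) - u n (m+1) h)) = a₂ ^ N := by
  obtain ⟨τ, hτ0, miura₁, miura₂⟩ := hτ
  intro n m
  simp only [miura₁, miura₂]
  constructor <;> rw [prod_const_mul_gauge_ratio _ _ _ (hτ0 _ _) (hτ0 _ _), ZMod.card]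

/-- First integrals of the discrete Gel'fand–Dikii hierarchy of rank `N`:
if `u` is related to a nowhere-zero tau function by the Miura maps, then the products of
the shifted differences over the cyclic component index equal `a₁^N` and `a₂^N`. -/
theorem stmt_4 (N : ℕ) [NeZero N] (hN : 2 ≤ N) (a₁ a₂ : ℂ)
    (u : ℤ → ℤ → ZMod N → ℂ)
    (hτ : ∃ τ : ℤ → ℤ → ZMod N → ℂ,
      (∀ (n m : ℤ) (h : ZMod N), τ n m h ≠ 0) ∧
      (∀ (n m : ℤ) (h : ZMod N),
        a₁ + u n m (h+1) - u (n+1) m h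
          = a₁ * (τ (n+1) m (h+1) * τ n m h) / (τ (n+1) m h * τ n m (h+1))) ∧
      (∀ (n m : ℤ) (h : ZMod N),
        a₂ + u n m (h+1) - u n (m+1) h
          = a₂ * (τ n (m+1) (h+1) * τ n m h) / (τ n (m+1) h * τ n m (h+1)))) :
    ∀ n m : ℤ,
      (∏ h : ZMod N, (a₁ + u n m (h+1) - u (n+1) m h)) = a₁ ^ N ∧
      (∏ h : ZMod N, (a₂ + u n m (h+1) - u n (m+1) h)) = a₂ ^ N :=
  stmt_4_general N a₁ a₂ u hτ
end

section
/- Let 𝒩 = 2 and let τ⁰, τ¹ : ℤ² → ℂ be nowhere zero and satisfy the coupled bilinear system a₁(τ⁰(n,m)τ¹(n+1,m+1) − τ¹(n,m+1)τ⁰(n+1,m)) = a₂(τ⁰(n,m)τ¹(n+1,m+1) − τ¹(n+1,m)τ⁰(n,m+1)) and a₁(τ¹(n,m)τ⁰(n+1,m+1) − τ⁰(n,m+1)τ¹(n+1,m)) = a₂(τ¹(n,m)τ⁰(n+1,m+1) − τ⁰(n+1,m)τ¹(n,m+1)), where a₁ ≠ ±a₂ and a₁a₂ ≠ 0. Then v(n,m)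 := τ¹(n,m)/τ⁰(n,m) satisfies the discrete modified KdV equation a₁(v(n,m)v(n,m+1) − v(n+1,m)v(n+1,m+1)) = a₂(v(n,m)v(n+1,m) − v(n,m+1)v(n+1,m+1)). -/
/-! Everything happens on a single plaquette: after clearing the denominators `τ⁰`, the discrete
mKdV equation for `v = τ¹/τ⁰` is `τ⁰ τ¹₁₂` times the second bilinear equation minus `τ¹ τ⁰₁₂`
times the first. -/

section Plaquette

variable {R : Type*} (a₁ a₂ f g f₁ g₁ f₂ g₂ f₁₂ g₁₂ : R)

theorem mkdv_mul_of_bilinear [CommRing R]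
    (h₀ : a₁ * (f * g₁₂ - g₂ * f₁) = a₂ * (f * g₁₂ - g₁ * f₂))
    (h₁ : a₁ * (g * f₁₂ - f₂ * g₁) = a₂ * (g * f₁₂ - f₁ * g₂)) :
    a₁ * (g * g₂ * f₁ * f₁₂ - g₁ * g₁₂ * f * f₂)
      = a₂ * (g * g₁ * f₂ * f₁₂ - g₂ * g₁₂ * f * f₁) := by
  linear_combination f * g₁₂ * h₁ - g * f₁₂ * h₀

theorem mkdv_div_of_bilinear [Field R]
    (hf : f ≠ 0) (hf₁ : f₁ ≠ 0) (hf₂ : f₂ ≠ 0) (hf₁₂ : f₁₂ ≠ 0)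
    (h₀ : a₁ * (f * g₁₂ - g₂ * f₁) = a₂ * (f * g₁₂ - g₁ * f₂))
    (h₁ : a₁ * (g * f₁₂ - f₂ * g₁) = a₂ * (g * f₁₂ - f₁ * g₂)) :
    a₁ * (g / f * (g₂ / f₂) - g₁ / f₁ * (g₁₂ / f₁₂))
      = a₂ * (g / f * (g₁ / f₁) - g₂ / f₂ * (g₁₂ / f₁₂)) := by
  field_simp
  linear_combination mkdv_mul_of_bilinear a₁ a₂ f g f₁ g₁ f₂ g₂ f₁₂ g₁₂ h₀ h₁

end Plaquette

theorem stmt_6_general (a₁ a₂ : ℂ)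
    (τ0 τ1 : ℤ → ℤ → ℂ)
    (hτ0 : ∀ n m : ℤ, τ0 n m ≠ 0)
    (hbil0 : ∀ n m : ℤ,
      a₁ * (τ0 n m * τ1 (n+1) (m+1) - τ1 n (m+1) * τ0 (n+1) m)
        = a₂ * (τ0 n m * τ1 (n+1) (m+1) - τ1 (n+1) m * τ0 n (m+1)))
    (hbil1 : ∀ n m : ℤ,
      a₁ * (τ1 n m * τ0 (n+1) (m+1) - τ0 n (m+1) * τ1 (n+1) m)
        = a₂ * (τ1 n m * τ0 (n+1) (m+1) - τ0 (n+1) m * τ1 n (m+1)))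
    (v : ℤ → ℤ → ℂ) (hv : ∀ n m : ℤ, v n m = τ1 n m / τ0 n m) :
    ∀ n m : ℤ,
      a₁ * (v n m * v n (m+1) - v (n+1) m * v (n+1) (m+1))
        = a₂ * (v n m * v (n+1) m - v n (m+1) * v (n+1) (m+1)) := by
  intro n m
  simp only [hv]
  exact mkdv_div_of_bilinear a₁ a₂ _ _ _ _ _ _ _ _ (hτ0 n m) (hτ0 (n+1) m) (hτ0 n (m+1))
    (hτ0 (n+1) (m+1)) (hbil0 n m) (hbil1 n m)

/-- For the rank-2 bilinear Gel'fand–Dikii system, the quotient `v = τ¹/τ⁰` satisfies the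
discrete modified KdV equation. -/
theorem stmt_6 (a₁ a₂ : ℂ) (ha1 : a₁ ≠ a₂) (ha2 : a₁ ≠ -a₂) (ha3 : a₁ * a₂ ≠ 0)
    (τ0 τ1 : ℤ → ℤ → ℂ)
    (hτ0 : ∀ n m : ℤ, τ0 n m ≠ 0) (hτ1 : ∀ n m : ℤ, τ1 n m ≠ 0)
    (hbil0 : ∀ n m : ℤ,
      a₁ * (τ0 n m * τ1 (n+1) (m+1) - τ1 n (m+1) * τ0 (n+1) m)
        = a₂ * (τ0 n m * τ1 (n+1) (m+1) - τ1 (n+1) m * τ0 n (m+1)))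
    (hbil1 : ∀ n m : ℤ,
      a₁ * (τ1 n m * τ0 (n+1) (m+1) - τ0 n (m+1) * τ1 (n+1) m)
        = a₂ * (τ1 n m * τ0 (n+1) (m+1) - τ0 (n+1) m * τ1 n (m+1)))
    (v : ℤ → ℤ → ℂ) (hv : ∀ n m : ℤ, v n m = τ1 n m / τ0 n m) :
    ∀ n m : ℤ,
      a₁ * (v n m * v n (m+1) - v (n+1) m * v (n+1) (m+1))
        = a₂ * (v n m * v (n+1) m - v n (m+1) * v (n+1) (m+1)) :=
  stmt_6_general a₁ a₂ τ0 τ1 hτ0 hbil0 hbil1 v hv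
end

section
/- Let v : ℤ² → ℂ be nowhere zero. Then v satisfies the discrete sine–Gordon equation a₁(v(n+1,m)v(n,m+1) − v(n,m)v(n+1,m+1)) = a₂(1 − v(n,m)v(n+1,m)v(n,m+1)v(n+1,m+1)) if and only if the pair (v⁰, v¹) := (v, 1/v) satisfies the discrete-time two-dimensional Toda system of A₁⁽¹⁾ type: a₁(v⁰(n+1,m+1)/v⁰(n,m+1) − v⁰(n+1,m)/v⁰(n,m)) = a₂(v⁰(n+1,m+1)/v¹(n+1,m) − v¹(n,m+1)/v⁰(n,m)) and a₁(v¹(n+1,m+1)/v¹(n,m+1) − v¹(n+1,m)/v¹(n,m)) = a₂(v¹(n+1,m+1)/v⁰(n+1,m) − v⁰(n,m+1)/v¹(n,m)). -/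
/-!
Evaluated on an elementary square with corner values `a = v n m`, `b = v (n+1) m`,
`c = v n (m+1)`, `d = v (n+1) (m+1)`, the first Toda equation is the sine–Gordon equation
divided by `-a c`. The second Toda equation is the first one for `1 / v`, and the sine–Gordon
equation is invariant under `v ↦ 1 / v` (multiply by `a b c d`).
-/

section SquareRelations

variable {K : Type*} [Field K] {a₁ a₂ a b c d : K}

theorem sineGordon_iff_toda (ha : a ≠ 0) (hc : c ≠ 0) :
    a₁ * (b * c - a * d) = a₂ * (1 - a * b * c * d) ↔
      a₁ * (d / c - b / a) = a₂ * (d / b⁻¹ - c⁻¹ / a) := by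
  constructor <;> intro h
  · field_simp
    linear_combination -h
  · field_simp at h
    linear_combination -h

theorem sineGordon_inv_iff (ha : a ≠ 0) (hb : b ≠ 0) (hc : c ≠ 0) (hd : d ≠ 0) :
    a₁ * (b⁻¹ * c⁻¹ - a⁻¹ * d⁻¹) = a₂ * (1 - a⁻¹ * b⁻¹ * c⁻¹ * d⁻¹) ↔
      a₁ * (b * c - a * d) = a₂ * (1 - a * b * c * d) := by
  constructor <;> intro h
  · field_simp at h
    linear_combination -h
  · field_simp
    linear_combination -h

end SquareRelations

theorem stmt_7_general (a₁ a₂ : ℂ)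
    (v : ℤ → ℤ → ℂ) (hv0 : ∀ n m : ℤ, v n m ≠ 0) :
    (∀ n m : ℤ,
      a₁ * (v (n+1) m * v n (m+1) - v n m * v (n+1) (m+1))
        = a₂ * (1 - v n m * v (n+1) m * v n (m+1) * v (n+1) (m+1)))
    ↔
    ((∀ n m : ℤ,
      a₁ * (v (n+1) (m+1) / v n (m+1) - v (n+1) m / v n m)
        = a₂ * (v (n+1) (m+1) / (v (n+1) m)⁻¹ - (v n (m+1))⁻¹ / v n m)) ∧
     (∀ n m : ℤ,
      a₁ * ((v (n+1) (m+1))⁻¹ / (v n (m+1))⁻¹ - (v (n+1) m)⁻¹ / (v n m)⁻¹)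
        = a₂ * ((v (n+1) (m+1))⁻¹ / v (n+1) m - v n (m+1) / (v n m)⁻¹))) := by
  simp only [← forall_and]
  refine forall₂_congr fun n m => ?_
  have hfst := sineGordon_iff_toda (a₁ := a₁) (a₂ := a₂) (b := v (n+1) m) (d := v (n+1) (m+1))
    (hv0 n m) (hv0 n (m+1))
  have hsnd := sineGordon_iff_toda (a₁ := a₁) (a₂ := a₂) (b := (v (n+1) m)⁻¹)
    (d := (v (n+1) (m+1))⁻¹) (inv_ne_zero (hv0 n m)) (inv_ne_zero (hv0 n (m+1)))
  rw [inv_inv, inv_inv,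
    sineGordon_inv_iff (hv0 n m) (hv0 (n+1) m) (hv0 n (m+1)) (hv0 (n+1) (m+1))] at hsnd
  rw [← hfst, ← hsnd, and_self]

/-- Equivalence between the discrete sine–Gordon equation for `v` and the discrete-time
two-dimensional Toda system of type `A₁⁽¹⁾` for the pair `(v, 1/v)`. -/
theorem stmt_7 (a₁ a₂ : ℂ) (ha₁ : a₁ ≠ 0) (ha₂ : a₂ ≠ 0)
    (v : ℤ → ℤ → ℂ) (hv0 : ∀ n m : ℤ, v n m ≠ 0) :
    (∀ n m : ℤ,
      a₁ * (v (n+1) m * v n (m+1) - v n m * v (n+1) (m+1))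
        = a₂ * (1 - v n m * v (n+1) m * v n (m+1) * v (n+1) (m+1)))
    ↔
    ((∀ n m : ℤ,
      a₁ * (v (n+1) (m+1) / v n (m+1) - v (n+1) m / v n m)
        = a₂ * (v (n+1) (m+1) / (v (n+1) m)⁻¹ - (v n (m+1))⁻¹ / v n m)) ∧
     (∀ n m : ℤ,
      a₁ * ((v (n+1) (m+1))⁻¹ / (v n (m+1))⁻¹ - (v (n+1) m)⁻¹ / (v n m)⁻¹)
        = a₂ * ((v (n+1) (m+1))⁻¹ / v (n+1) m - v n (m+1) / (v n m)⁻¹))) :=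
  stmt_7_general a₁ a₂ v hv0
end

section
/- Let τ : ℤ² → ℂ be nowhere vanishing and satisfy the two 6-point discrete bilinear KdV equations (a₁+a₂)τ(n,m+1)τ(n+2,m) + (a₁−a₂)τ(n,m)τ(n+2,m+1) = 2a₁τ(n+1,m)τ(n+1,m+1) and (a₁+a₂)τ(n+1,m)τ(n,m+2) − (a₁−a₂)τ(n,m)τ(n+1,m+2) = 2a₂τ(n,m+1)τ(n+1,m+1) for all n,m. Then τ satisfies the 5-point discrete bilinear KdV equation (a₁−a₂)²τ(n,m)τ(n+2,m+2) − (a₁+a₂)²τ(n+2,m)τ(n,m+2) + 4a₁a₂τ(n+1,m+1)² = 0. -/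
/-!
Multiplied by `τ n (m+1)`, the 5-point expression at `(n, m)` is an explicit combination, with
coefficients polynomial in `τ`, of the 6-point residuals `A(n, m)`, `A(n, m+1)` and `B(n, m)`;
since `τ n (m+1) ≠ 0`, it vanishes whenever the 6-point equations hold.
-/

namespace DiscreteKdV

variable {R : Type*} [CommRing R] (a₁ a₂ : R) (τ : ℤ → ℤ → R)

def sixPointResidualA (n m : ℤ) : R :=
  (a₁ + a₂) * τ n (m+1) * τ (n+2) m + (a₁ - a₂) * τ n m * τ (n+2) (m+1)
    - 2 * a₁ * τ (n+1) m * τ (n+1) (m+1)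

def sixPointResidualB (n m : ℤ) : R :=
  (a₁ + a₂) * τ (n+1) m * τ n (m+2) - (a₁ - a₂) * τ n m * τ (n+1) (m+2)
    - 2 * a₂ * τ n (m+1) * τ (n+1) (m+1)

def fivePointResidual (n m : ℤ) : R :=
  (a₁ - a₂)^2 * τ n m * τ (n+2) (m+2) - (a₁ + a₂)^2 * τ (n+2) m * τ n (m+2)
    + 4 * a₁ * a₂ * (τ (n+1) (m+1))^2

theorem fivePointResidual_mul_eq (n m : ℤ) :
    fivePointResidual a₁ a₂ τ n m * τ n (m+1) =
      (a₁ - a₂) * τ n m * sixPointResidualA a₁ a₂ τ n (m+1)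
        - (a₁ + a₂) * τ n (m+2) * sixPointResidualA a₁ a₂ τ n m
        - 2 * a₁ * τ (n+1) (m+1) * sixPointResidualB a₁ a₂ τ n m := by
  simp only [fivePointResidual, sixPointResidualA, sixPointResidualB, add_assoc,
    show (1 : ℤ) + 1 = 2 by norm_num]
  ring

theorem fivePointResidual_eq_zero [IsDomain R] {n m : ℤ} (hτ : τ n (m+1) ≠ 0)
    (hA : ∀ n m, sixPointResidualA a₁ a₂ τ n m = 0)
    (hB : ∀ n m, sixPointResidualB a₁ a₂ τ n m = 0) :
    fivePointResidual a₁ a₂ τ n m = 0 := by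
  have h := fivePointResidual_mul_eq a₁ a₂ τ n m
  rw [hA, hA, hB] at h
  simpa [hτ] using h

end DiscreteKdV

/-- The two 6-point discrete bilinear KdV equations imply the 5-point discrete bilinear
KdV equation. -/
theorem stmt_8 (a₁ a₂ : ℂ) (τ : ℤ → ℤ → ℂ)
    (hτ0 : ∀ n m : ℤ, τ n m ≠ 0)
    (h6a : ∀ n m : ℤ,
      (a₁ + a₂) * τ n (m+1) * τ (n+2) m + (a₁ - a₂) * τ n m * τ (n+2) (m+1)
        = 2 * a₁ * τ (n+1) m * τ (n+1) (m+1))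
    (h6b : ∀ n m : ℤ,
      (a₁ + a₂) * τ (n+1) m * τ n (m+2) - (a₁ - a₂) * τ n m * τ (n+1) (m+2)
        = 2 * a₂ * τ n (m+1) * τ (n+1) (m+1)) :
    ∀ n m : ℤ,
      (a₁ - a₂)^2 * τ n m * τ (n+2) (m+2) - (a₁ + a₂)^2 * τ (n+2) m * τ n (m+2)
        + 4 * a₁ * a₂ * (τ (n+1) (m+1))^2 = 0 := by
  intro n m
  exact DiscreteKdV.fivePointResidual_eq_zero a₁ a₂ τ (hτ0 n (m+1))
    (fun n m => sub_eq_zero.mpr (h6a n m)) (fun n m => sub_eq_zero.mpr (h6b n m))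
end

section
/- Let u : ℤ² → ℂ satisfy the discrete Schwarzian KdV relation derived from the 𝒩 = 2, (α,β) = (1,1) system: suppose there exist nowhere-zero v⁰, v¹ : ℤ² → ℂ with v⁰v¹ = 1 such that a₁ + u(n,m) − u(n+1,m) = a₁ v⁰(n+1,m)/v¹(n,m) (component 0) and a₁ + u¹(n,m) − u¹(n+1,m) = a₁ v¹(n+1,m)/v⁰(n,m), and similarly with a₂ for m-shifts. Then the first integrals (a₁ + u(n,m) − u(n+1,m))(a₁ + u¹(n,m) − u¹(n+1,m)) = a₁² and (a₂ + u(n,m) − u(n,m+1))(a₂ + u¹(n,m) − u¹(n,m+1)) = a₂² hold; consequently, if additionally the two-component system of the (1,1) class holds, the component u satisfies the discrete Schwarzian KdV equation (a₁+u(n,m)−u(n+1,m))(a₁+u(n,m+1)−u(n+1,m+1)) / ((a₂+u(n,m)−u(n,m+1))(a₂+u(n+1,m)−u(n+1,m+1))) = a₁²/a₂². -/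
/-!
Since `v⁰ v¹ = 1`, dividing by `v¹` is multiplying by `v⁰`, so the Miura maps factorise every
lattice difference of `u` as `a₁ v⁰(n+1,m) v⁰(n,m)` or `a₂ v⁰(n,m+1) v⁰(n,m)` (and those of `u¹`
likewise through `v¹`). The first integrals are then `v⁰ v¹ = 1` at the two ends of an edge, and
in the cross-ratio of an elementary plaquette the four values of `v⁰` at its corners cancel.
-/

theorem div_eq_mul_of_mul_eq_one {α : Type*} [DivisionMonoid α] {x y z : α} (h : y * z = 1) :
    x / z = x * y := by
  rw [eq_inv_of_mul_eq_one_right h, div_inv_eq_mul]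

theorem first_integral_of_mul_eq_one {R : Type*} [CommRing R] {a x y x' y' : R}
    (h : x * y = 1) (h' : x' * y' = 1) : a * x' * x * (a * y' * y) = a ^ 2 := by
  linear_combination a ^ 2 * (x' * y' * h + h')

theorem cross_ratio_of_factorization {K : Type*} [Field K] (a₁ a₂ : K) {w₀₀ w₁₀ w₀₁ w₁₁ : K}
    (h₀₀ : w₀₀ ≠ 0) (h₁₀ : w₁₀ ≠ 0) (h₀₁ : w₀₁ ≠ 0) (h₁₁ : w₁₁ ≠ 0) :
    a₁ * w₁₀ * w₀₀ * (a₁ * w₁₁ * w₀₁) / (a₂ * w₀₁ * w₀₀ * (a₂ * w₁₁ * w₁₀)) = a₁ ^ 2 / a₂ ^ 2 := by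
  have hw : w₀₀ * w₁₀ * w₀₁ * w₁₁ ≠ 0 := by positivity
  rw [← mul_div_mul_right (a₁ ^ 2) (a₂ ^ 2) hw]
  ring

theorem stmt_9_general (a₁ a₂ : ℂ)
    (u u₁ v0 v1 : ℤ → ℤ → ℂ)
    (hprod : ∀ n m : ℤ, v0 n m * v1 n m = 1)
    (hM1 : ∀ n m : ℤ, a₁ + u n m - u (n+1) m = a₁ * v0 (n+1) m / v1 n m)
    (hM2 : ∀ n m : ℤ, a₁ + u₁ n m - u₁ (n+1) m = a₁ * v1 (n+1) m / v0 n m)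
    (hM3 : ∀ n m : ℤ, a₂ + u n m - u n (m+1) = a₂ * v0 n (m+1) / v1 n m)
    (hM4 : ∀ n m : ℤ, a₂ + u₁ n m - u₁ n (m+1) = a₂ * v1 n (m+1) / v0 n m) :
    (∀ n m : ℤ,
      (a₁ + u n m - u (n+1) m) * (a₁ + u₁ n m - u₁ (n+1) m) = a₁^2 ∧
      (a₂ + u n m - u n (m+1)) * (a₂ + u₁ n m - u₁ n (m+1)) = a₂^2)
    ∧ (∀ n m : ℤ,
      ((a₁ + u n m - u (n+1) m) * (a₁ + u n (m+1) - u (n+1) (m+1)))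
        / ((a₂ + u n m - u n (m+1)) * (a₂ + u (n+1) m - u (n+1) (m+1)))
        = a₁^2 / a₂^2) := by
  have hprod' (n m : ℤ) : v1 n m * v0 n m = 1 := by rw [mul_comm, hprod]
  have hv0 (n m : ℤ) : v0 n m ≠ 0 := left_ne_zero_of_mul_eq_one (hprod n m)
  have hP (n m : ℤ) : a₁ + u n m - u (n+1) m = a₁ * v0 (n+1) m * v0 n m := by
    rw [hM1, div_eq_mul_of_mul_eq_one (hprod n m)]
  have hQ (n m : ℤ) : a₂ + u n m - u n (m+1) = a₂ * v0 n (m+1) * v0 n m := by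
    rw [hM3, div_eq_mul_of_mul_eq_one (hprod n m)]
  have hR (n m : ℤ) : a₁ + u₁ n m - u₁ (n+1) m = a₁ * v1 (n+1) m * v1 n m := by
    rw [hM2, div_eq_mul_of_mul_eq_one (hprod' n m)]
  have hR' (n m : ℤ) : a₂ + u₁ n m - u₁ n (m+1) = a₂ * v1 n (m+1) * v1 n m := by
    rw [hM4, div_eq_mul_of_mul_eq_one (hprod' n m)]
  refine ⟨fun n m => ⟨?_, ?_⟩, fun n m => ?_⟩
  · rw [hP, hR]
    exact first_integral_of_mul_eq_one (hprod n m) (hprod (n+1) m)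
  · rw [hQ, hR']
    exact first_integral_of_mul_eq_one (hprod n m) (hprod n (m+1))
  · rw [hP, hP, hQ, hQ]
    exact cross_ratio_of_factorization a₁ a₂
      (hv0 n m) (hv0 (n+1) m) (hv0 n (m+1)) (hv0 (n+1) (m+1))

/-- The `𝒩 = 2`, `(α,β) = (1,1)` class: the Miura maps imply the first integrals, and
together with the two-component system they imply the discrete Schwarzian KdV equation. -/
theorem stmt_9 (a₁ a₂ : ℂ) (ha₂ : a₂ ≠ 0)
    (u u₁ v0 v1 : ℤ → ℤ → ℂ)
    (hv0 : ∀ n m : ℤ, v0 n m ≠ 0) (hv1 : ∀ n m : ℤ, v1 n m ≠ 0)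
    (hprod : ∀ n m : ℤ, v0 n m * v1 n m = 1)
    (hM1 : ∀ n m : ℤ, a₁ + u n m - u (n+1) m = a₁ * v0 (n+1) m / v1 n m)
    (hM2 : ∀ n m : ℤ, a₁ + u₁ n m - u₁ (n+1) m = a₁ * v1 (n+1) m / v0 n m)
    (hM3 : ∀ n m : ℤ, a₂ + u n m - u n (m+1) = a₂ * v0 n (m+1) / v1 n m)
    (hM4 : ∀ n m : ℤ, a₂ + u₁ n m - u₁ n (m+1) = a₂ * v1 n (m+1) / v0 n m)
    (hS1 : ∀ n m : ℤ,
      (a₁ + u n (m+1) - u (n+1) (m+1)) / (a₁ + u₁ n m - u₁ (n+1) m)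
        = (a₂ + u (n+1) m - u (n+1) (m+1)) / (a₂ + u₁ n m - u₁ n (m+1)))
    (hS2 : ∀ n m : ℤ,
      (a₁ + u₁ n (m+1) - u₁ (n+1) (m+1)) / (a₁ + u n m - u (n+1) m)
        = (a₂ + u₁ (n+1) m - u₁ (n+1) (m+1)) / (a₂ + u n m - u n (m+1)))
    (hden : ∀ n m : ℤ, a₂ + u n m - u n (m+1) ≠ 0) :
    (∀ n m : ℤ,
      (a₁ + u n m - u (n+1) m) * (a₁ + u₁ n m - u₁ (n+1) m) = a₁^2 ∧
      (a₂ + u n m - u n (m+1)) * (a₂ + u₁ n m - u₁ n (m+1)) = a₂^2)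
    ∧ (∀ n m : ℤ,
      ((a₁ + u n m - u (n+1) m) * (a₁ + u n (m+1) - u (n+1) (m+1)))
        / ((a₂ + u n m - u n (m+1)) * (a₂ + u (n+1) m - u (n+1) (m+1)))
        = a₁^2 / a₂^2) :=
  stmt_9_general a₁ a₂ u u₁ v0 v1 hprod hM1 hM2 hM3 hM4
end

section
/- Fix 𝒩 ≥ 2, a₁ ∈ ℂ, λ₁ ∈ ℂ. Let τ : ℤ² × (ℤ/𝒩ℤ) → ℂ be nowhere zero, and let θ, φ : ℤ² × (ℤ/𝒩ℤ) → ℂ satisfy, for every l and fixed shifts α, β ∈ ℤ, the discrete linear equation φ(n+1,m,l) = a₁·(τ(n,m,l+α)τ(n+1,m,l+1)/(τ(n,m,l+α+1)τ(n+1,m,l)))·φ(n,m,l+α) + λφ(n,m,l+α+1) with spectral parameter λ, and the same equation for θ with λ replaced by λ₁. Assume θ is nowhere zero. Define τ̃(n,m,l) := θ(n,m,l+α+β)·τ(n,m,l+α+β) and φ̃(n,m,l) := λφ(n,m,l+α+β+1) − λ₁·θ(n,m,l+α+β+1)·θ(n,m,l+α+β)⁻¹·φ(n,m,l+α+β). Then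 φ̃ and τ̃ satisfy the same discrete linear equation: φ̃(n+1,m,l) = a₁·(τ̃(n,m,l+α)τ̃(n+1,m,l+1)/(τ̃(n,m,l+α+1)τ̃(n+1,m,l)))·φ̃(n,m,l+α) + λφ̃(n,m,l+α+1). -/
/-!
The equation only links the slice `n` to the slice `n + 1` and is invariant under translations
in `l`, so it suffices to show that `θ τ` and `λ φ(· + 1) - λ₁ θ(· + 1) θ⁻¹ φ` satisfy it; the
shift by `α + β` is then harmless. Replacing `τ` by `θ τ` multiplies the coefficient of the
equation by `θ(l + α) θ'(l + 1) / (θ(l + α + 1) θ'(l))`, where `θ'` is the next slice of `θ`.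
After substituting the equations for the next slices of `φ` and `θ`, what remains is a rational
identity in the values of `θ` and `φ`.
-/

namespace LaxDarboux

variable {G K : Type*} [AddCommMonoidWithOne G] [Field K]

def laxCoeff (a₁ : K) (α : G) (τ τ' : G → K) (l : G) : K :=
  a₁ * (τ (l + α) * τ' (l + 1) / (τ (l + α + 1) * τ' l))

/-- `τ, ψ` are the slices at `n` and `τ', ψ'` the slices at `n + 1`. -/
def IsLaxStep (a₁ lam : K) (α : G) (τ τ' ψ ψ' : G → K) : Prop :=
  ∀ l, ψ' l = laxCoeff a₁ α τ τ' l * ψ (l + α) + lam * ψ (l + α + 1)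

def darbouxWave (lam lam₁ : K) (θ φ : G → K) (l : G) : K :=
  lam * φ (l + 1) - lam₁ * θ (l + 1) * (θ l)⁻¹ * φ l

theorem IsLaxStep.comp_add_right {a₁ lam : K} {α : G} {τ τ' ψ ψ' : G → K}
    (h : IsLaxStep a₁ lam α τ τ' ψ ψ') (s : G) :
    IsLaxStep a₁ lam α (fun l ↦ τ (l + s)) (fun l ↦ τ' (l + s))
      (fun l ↦ ψ (l + s)) (fun l ↦ ψ' (l + s)) := by
  intro l
  simp only [h (l + s), laxCoeff, add_right_comm _ s]

theorem laxCoeff_mul (a₁ : K) (α : G) (θ θ' τ τ' : G → K) (l : G) :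
    laxCoeff a₁ α (θ * τ) (θ' * τ') l
      = laxCoeff a₁ α τ τ' l * (θ (l + α) * θ' (l + 1) / (θ (l + α + 1) * θ' l)) := by
  simp only [laxCoeff, Pi.mul_apply, mul_div_mul_comm]
  ring

theorem darboux_identity (lam lam₁ r₀ r₁ θ₀ θ₁ θ₂ φ₀ φ₁ φ₂ : K)
    (hθ₀ : θ₀ ≠ 0) (hθ₁ : θ₁ ≠ 0) (hθ'₀ : r₀ * θ₀ + lam₁ * θ₁ ≠ 0) :
    lam * (r₁ * φ₁ + lam * φ₂)
        - lam₁ * (r₁ * θ₁ + lam₁ * θ₂) * (r₀ * θ₀ + lam₁ * θ₁)⁻¹ * (r₀ * φ₀ + lam * φ₁)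
      = r₀ * (θ₀ * (r₁ * θ₁ + lam₁ * θ₂) / (θ₁ * (r₀ * θ₀ + lam₁ * θ₁)))
          * (lam * φ₁ - lam₁ * θ₁ * θ₀⁻¹ * φ₀)
        + lam * (lam * φ₂ - lam₁ * θ₂ * θ₁⁻¹ * φ₁) := by
  field_simp
  ring

theorem IsLaxStep.darboux {a₁ lam lam₁ : K} {α : G} {τ τ' θ θ' φ φ' : G → K}
    (hφ : IsLaxStep a₁ lam α τ τ' φ φ') (hθ : IsLaxStep a₁ lam₁ α τ τ' θ θ')
    (hθ0 : ∀ l, θ l ≠ 0) (hθ'0 : ∀ l, θ' l ≠ 0) :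
    IsLaxStep a₁ lam α (θ * τ) (θ' * τ')
      (darbouxWave lam lam₁ θ φ) (darbouxWave lam lam₁ θ' φ') := by
  intro l
  have hθ'₀ := hθ'0 l
  rw [hθ l] at hθ'₀
  simp only [darbouxWave, laxCoeff_mul, hφ l, hφ (l + 1), hθ l, hθ (l + 1),
    add_right_comm _ 1 α]
  exact darboux_identity _ _ _ _ _ _ _ _ _ _ (hθ0 _) (hθ0 _) hθ'₀

end LaxDarboux

open LaxDarboux in
theorem stmt_10_general (N : ℕ) (a₁ lam lam₁ : ℂ) (α β : ℤ)
    (τ θ φ : ℤ → ℤ → ZMod N → ℂ)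
    (hθ0 : ∀ (n m : ℤ) (l : ZMod N), θ n m l ≠ 0)
    (hφ : ∀ (n m : ℤ) (l : ZMod N),
      φ (n+1) m l
        = a₁ * (τ n m (l + (α : ZMod N)) * τ (n+1) m (l+1)
            / (τ n m (l + (α : ZMod N) + 1) * τ (n+1) m l)) * φ n m (l + (α : ZMod N))
          + lam * φ n m (l + (α : ZMod N) + 1))
    (hθ : ∀ (n m : ℤ) (l : ZMod N),
      θ (n+1) m l
        = a₁ * (τ n m (l + (α : ZMod N)) * τ (n+1) m (l+1)
            / (τ n m (l + (α : ZMod N) + 1) * τ (n+1) m l)) * θ n m (l + (α : ZMod N))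
          + lam₁ * θ n m (l + (α : ZMod N) + 1))
    (τt φt : ℤ → ℤ → ZMod N → ℂ)
    (hτt : ∀ (n m : ℤ) (l : ZMod N),
      τt n m l = θ n m (l + (α : ZMod N) + (β : ZMod N)) * τ n m (l + (α : ZMod N) + (β : ZMod N)))
    (hφt : ∀ (n m : ℤ) (l : ZMod N),
      φt n m l = lam * φ n m (l + (α : ZMod N) + (β : ZMod N) + 1)
        - lam₁ * θ n m (l + (α : ZMod N) + (β : ZMod N) + 1)
            * (θ n m (l + (α : ZMod N) + (β : ZMod N)))⁻¹
            * φ n m (l + (α : ZMod N) + (β : ZMod N))) :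
    ∀ (n m : ℤ) (l : ZMod N),
      φt (n+1) m l
        = a₁ * (τt n m (l + (α : ZMod N)) * τt (n+1) m (l+1)
            / (τt n m (l + (α : ZMod N) + 1) * τt (n+1) m l)) * φt n m (l + (α : ZMod N))
          + lam * φt n m (l + (α : ZMod N) + 1) := by
  have hτt' : τt = fun n m l ↦ (θ n m * τ n m) (l + ((α : ZMod N) + β)) := by
    ext n m l
    rw [hτt, Pi.mul_apply, add_assoc]
  have hφt' : φt = fun n m l ↦ darbouxWave lam lam₁ (θ n m) (φ n m) (l + ((α : ZMod N) + β)) := by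
    ext n m l
    rw [hφt, darbouxWave, add_assoc l]
  subst hτt' hφt'
  intro n m
  have hφ' : IsLaxStep a₁ lam (α : ZMod N) (τ n m) (τ (n+1) m) (φ n m) (φ (n+1) m) := hφ n m
  have hθ' : IsLaxStep a₁ lam₁ (α : ZMod N) (τ n m) (τ (n+1) m) (θ n m) (θ (n+1) m) := hθ n m
  exact (hφ'.darboux hθ' (hθ0 n m) (hθ0 (n+1) m)).comp_add_right _

/-- Covariance of the `ℤ_𝒩` graded discrete Lax equation (in tau-function form) under the
one-fold Darboux transformation. -/
theorem stmt_10 (N : ℕ) [NeZero N] (hN : 2 ≤ N) (a₁ lam lam₁ : ℂ) (α β : ℤ)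
    (τ θ φ : ℤ → ℤ → ZMod N → ℂ)
    (hτ0 : ∀ (n m : ℤ) (l : ZMod N), τ n m l ≠ 0)
    (hθ0 : ∀ (n m : ℤ) (l : ZMod N), θ n m l ≠ 0)
    (hφ : ∀ (n m : ℤ) (l : ZMod N),
      φ (n+1) m l
        = a₁ * (τ n m (l + (α : ZMod N)) * τ (n+1) m (l+1)
            / (τ n m (l + (α : ZMod N) + 1) * τ (n+1) m l)) * φ n m (l + (α : ZMod N))
          + lam * φ n m (l + (α : ZMod N) + 1))
    (hθ : ∀ (n m : ℤ) (l : ZMod N),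
      θ (n+1) m l
        = a₁ * (τ n m (l + (α : ZMod N)) * τ (n+1) m (l+1)
            / (τ n m (l + (α : ZMod N) + 1) * τ (n+1) m l)) * θ n m (l + (α : ZMod N))
          + lam₁ * θ n m (l + (α : ZMod N) + 1))
    (τt φt : ℤ → ℤ → ZMod N → ℂ)
    (hτt : ∀ (n m : ℤ) (l : ZMod N),
      τt n m l = θ n m (l + (α : ZMod N) + (β : ZMod N)) * τ n m (l + (α : ZMod N) + (β : ZMod N)))
    (hφt : ∀ (n m : ℤ) (l : ZMod N),
      φt n m l = lam * φ n m (l + (α : ZMod N) + (β : ZMod N) + 1)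
        - lam₁ * θ n m (l + (α : ZMod N) + (β : ZMod N) + 1)
            * (θ n m (l + (α : ZMod N) + (β : ZMod N)))⁻¹
            * φ n m (l + (α : ZMod N) + (β : ZMod N))) :
    ∀ (n m : ℤ) (l : ZMod N),
      φt (n+1) m l
        = a₁ * (τt n m (l + (α : ZMod N)) * τt (n+1) m (l+1)
            / (τt n m (l + (α : ZMod N) + 1) * τt (n+1) m l)) * φt n m (l + (α : ZMod N))
          + lam * φt n m (l + (α : ZMod N) + 1) :=
  stmt_10_general N a₁ lam lam₁ α β τ θ φ hθ0 hφ hθ τt φt hτt hφt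
end

section
/- Fix 𝒩 ≥ 2 and λ₁ ∈ ℂ. Let τ, θ, φ : ℝ × (ℤ/𝒩ℤ) → ℂ with τ, θ nowhere zero and all functions differentiable in x, satisfying the continuous Lax equations ∂ₓφ(x,l) = (∂ₓ ln τ(x,l+1) − ∂ₓ ln τ(x,l))φ(x,l) + λφ(x,l+1) and ∂ₓθ(x,l) = (∂ₓ ln τ(x,l+1) − ∂ₓ ln τ(x,l))θ(x,l) + λ₁θ(x,l+1). Define τ̃(x,l) := θ(x,l)τ(x,l) and φ̃(x,l) := ∂ₓφ(x,l) − (∂ₓθ(x,l))θ(x,l)⁻¹φ(x,l). Then φ̃ satisfies ∂ₓφ̃(x,l) = (∂ₓ ln τ̃(x,l+1) − ∂ₓ ln τ̃(x,l))φ̃(x,l) + λφ̃(x,l+1) for all l. -/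
/-!
Both Lax equations share the potential `V l = ∂ₓ ln τ(l+1) − ∂ₓ ln τ(l)`, so it cancels in
`φ̃ = ∂ₓφ − (∂ₓ ln θ) φ`, leaving the closed form `φ̃ l = λ φ(l+1) − λ₁ r l φ l` with
`r l = θ(l+1)/θ l`. The new potential is `Ṽ l = V l + ∂ₓ ln θ(l+1) − ∂ₓ ln θ l`, and
`∂ₓ ln θ l = V l + λ₁ r l`; differentiating the closed form with `∂ₓ r = r (Ṽ − V)` then turns
the claim into a polynomial identity in these quantities.
-/

section LaxEquation

variable {ι : Type*} [Add ι] [One ι]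

noncomputable def laxPotential (τ : ℝ → ι → ℂ) (x : ℝ) (l : ι) : ℂ :=
  logDeriv (τ · (l + 1)) x - logDeriv (τ · l) x

def IsLaxEigenfunction (τ : ℝ → ι → ℂ) (lam : ℂ) (φ : ℝ → ι → ℂ) : Prop :=
  ∀ x l, deriv (φ · l) x = laxPotential τ x l * φ x l + lam * φ x (l + 1)

variable {τ θ φ : ℝ → ι → ℂ} {lam lam₁ : ℂ}

lemma IsLaxEigenfunction.logDeriv_eq (hθ : IsLaxEigenfunction τ lam₁ θ) {x : ℝ} {l : ι}
    (hθ0 : θ x l ≠ 0) :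
    logDeriv (θ · l) x = laxPotential τ x l + lam₁ * (θ x (l + 1) / θ x l) := by
  rw [logDeriv_apply, hθ]
  field_simp

lemma IsLaxEigenfunction.deriv_sub_logDeriv_mul (hφ : IsLaxEigenfunction τ lam φ)
    (hθ : IsLaxEigenfunction τ lam₁ θ) {x : ℝ} {l : ι} (hθ0 : θ x l ≠ 0) :
    deriv (φ · l) x - logDeriv (θ · l) x * φ x l
      = lam * φ x (l + 1) - lam₁ * (θ x (l + 1) / θ x l) * φ x l := by
  rw [hφ, hθ.logDeriv_eq hθ0]
  ring

lemma laxPotential_mul {x : ℝ} {l : ι} (hθ0 : ∀ m, θ x m ≠ 0) (hτ0 : ∀ m, τ x m ≠ 0)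
    (hθd : ∀ m, DifferentiableAt ℝ (θ · m) x) (hτd : ∀ m, DifferentiableAt ℝ (τ · m) x) :
    laxPotential (fun y m => θ y m * τ y m) x l
      = laxPotential τ x l + logDeriv (θ · (l + 1)) x - logDeriv (θ · l) x := by
  simp only [laxPotential]
  rw [logDeriv_mul x (hθ0 _) (hτ0 _) (hθd _) (hτd _),
    logDeriv_mul x (hθ0 _) (hτ0 _) (hθd _) (hτd _)]
  ring

lemma hasDerivAt_div_logDeriv {f g : ℝ → ℂ} {x : ℝ} (hf0 : f x ≠ 0) (hg0 : g x ≠ 0)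
    (hf : DifferentiableAt ℝ f x) (hg : DifferentiableAt ℝ g x) :
    HasDerivAt (fun y => f y / g y) (f x / g x * (logDeriv f x - logDeriv g x)) x := by
  rw [← logDeriv_div x hf0 hg0 hf hg, logDeriv_apply,
    mul_div_cancel₀ _ (div_ne_zero hf0 hg0)]
  exact (hf.div hg hg0).hasDerivAt

theorem IsLaxEigenfunction.darboux (hφ : IsLaxEigenfunction τ lam φ)
    (hθ : IsLaxEigenfunction τ lam₁ θ) (hθ0 : ∀ x l, θ x l ≠ 0) (hτ0 : ∀ x l, τ x l ≠ 0)
    (hφd : ∀ l, Differentiable ℝ (φ · l)) (hθd : ∀ l, Differentiable ℝ (θ · l))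
    (hτd : ∀ l, Differentiable ℝ (τ · l)) :
    IsLaxEigenfunction (fun x l => θ x l * τ x l) lam
      (fun x l => lam * φ x (l + 1) - lam₁ * (θ x (l + 1) / θ x l) * φ x l) := by
  intro x l
  beta_reduce
  have hr := hasDerivAt_div_logDeriv (hθ0 x (l + 1)) (hθ0 x l) (hθd _ x) (hθd l x)
  have hderiv := ((hφd (l + 1) x).hasDerivAt.const_mul lam).fun_sub
    ((hr.const_mul lam₁).fun_mul (hφd l x).hasDerivAt)
  rw [hderiv.deriv, laxPotential_mul (hθ0 x) (hτ0 x) (fun m => hθd m x) (fun m => hτd m x),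
    hφ x l, hφ x (l + 1)]
  linear_combination (-lam * φ x (l + 1)) * (hθ.logDeriv_eq (hθ0 x (l + 1))
    - hθ.logDeriv_eq (hθ0 x l))

end LaxEquation

theorem stmt_12_general (N : ℕ) (lam lam₁ : ℂ)
    (τ θ φ : ℝ → ZMod N → ℂ)
    (hτ0 : ∀ (x : ℝ) (l : ZMod N), τ x l ≠ 0)
    (hθ0 : ∀ (x : ℝ) (l : ZMod N), θ x l ≠ 0)
    (hτd : ∀ l : ZMod N, ContDiff ℝ 2 (fun y => τ y l))
    (hθd : ∀ l : ZMod N, ContDiff ℝ 2 (fun y => θ y l))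
    (hφd : ∀ l : ZMod N, ContDiff ℝ 2 (fun y => φ y l))
    (hφ : ∀ (x : ℝ) (l : ZMod N),
      deriv (fun y => φ y l) x
        = (deriv (fun y => τ y (l+1)) x / τ x (l+1) - deriv (fun y => τ y l) x / τ x l)
            * φ x l + lam * φ x (l+1))
    (hθ : ∀ (x : ℝ) (l : ZMod N),
      deriv (fun y => θ y l) x
        = (deriv (fun y => τ y (l+1)) x / τ x (l+1) - deriv (fun y => τ y l) x / τ x l)
            * θ x l + lam₁ * θ x (l+1))
    (τt φt : ℝ → ZMod N → ℂ)
    (hτt : ∀ (x : ℝ) (l : ZMod N), τt x l = θ x l * τ x l)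
    (hφt : ∀ (x : ℝ) (l : ZMod N),
      φt x l = deriv (fun y => φ y l) x - deriv (fun y => θ y l) x * (θ x l)⁻¹ * φ x l) :
    ∀ (x : ℝ) (l : ZMod N),
      deriv (fun y => φt y l) x
        = (deriv (fun y => τt y (l+1)) x / τt x (l+1) - deriv (fun y => τt y l) x / τt x l)
            * φt x l + lam * φt x (l+1) := by
  have hφ' : IsLaxEigenfunction τ lam φ := hφ
  have hθ' : IsLaxEigenfunction τ lam₁ θ := hθ
  have hφt' : φt = fun x l => lam * φ x (l + 1) - lam₁ * (θ x (l + 1) / θ x l) * φ x l := by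
    ext x l
    rw [hφt, ← div_eq_mul_inv, ← logDeriv_apply, hφ'.deriv_sub_logDeriv_mul hθ' (hθ0 x l)]
  have hτt' : τt = fun x l => θ x l * τ x l := funext₂ hτt
  subst hφt' hτt'
  exact hφ'.darboux hθ' hθ0 hτ0 (fun l => (hφd l).differentiable two_ne_zero)
    (fun l => (hθd l).differentiable two_ne_zero) (fun l => (hτd l).differentiable two_ne_zero)

/-- Covariance of the continuous `ℤ_𝒩` graded spectral problem under the basic Darboux
transformation `τ̃ = θτ`, `φ̃ = ∂ₓφ − (∂ₓθ/θ)φ`. -/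
theorem stmt_12 (N : ℕ) [NeZero N] (hN : 2 ≤ N) (lam lam₁ : ℂ)
    (τ θ φ : ℝ → ZMod N → ℂ)
    (hτ0 : ∀ (x : ℝ) (l : ZMod N), τ x l ≠ 0)
    (hθ0 : ∀ (x : ℝ) (l : ZMod N), θ x l ≠ 0)
    (hτd : ∀ l : ZMod N, ContDiff ℝ 2 (fun y => τ y l))
    (hθd : ∀ l : ZMod N, ContDiff ℝ 2 (fun y => θ y l))
    (hφd : ∀ l : ZMod N, ContDiff ℝ 2 (fun y => φ y l))
    (hφ : ∀ (x : ℝ) (l : ZMod N),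
      deriv (fun y => φ y l) x
        = (deriv (fun y => τ y (l+1)) x / τ x (l+1) - deriv (fun y => τ y l) x / τ x l)
            * φ x l + lam * φ x (l+1))
    (hθ : ∀ (x : ℝ) (l : ZMod N),
      deriv (fun y => θ y l) x
        = (deriv (fun y => τ y (l+1)) x / τ x (l+1) - deriv (fun y => τ y l) x / τ x l)
            * θ x l + lam₁ * θ x (l+1))
    (τt φt : ℝ → ZMod N → ℂ)
    (hτt : ∀ (x : ℝ) (l : ZMod N), τt x l = θ x l * τ x l)
    (hφt : ∀ (x : ℝ) (l : ZMod N),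
      φt x l = deriv (fun y => φ y l) x - deriv (fun y => θ y l) x * (θ x l)⁻¹ * φ x l) :
    ∀ (x : ℝ) (l : ZMod N),
      deriv (fun y => φt y l) x
        = (deriv (fun y => τt y (l+1)) x / τt x (l+1) - deriv (fun y => τt y l) x / τt x l)
            * φt x l + lam * φt x (l+1) :=
  stmt_12_general N lam lam₁ τ θ φ hτ0 hθ0 hτd hθd hφd hφ hθ τt φt hτt hφt
end

section
/- Let a₁, a₂ ∈ ℂ, suppose v : ℤ² → ℂ is nowhere zero and satisfies the 𝒩 = 2 discrete modified KdV equation a₁(v(n,m)v(n,m+1) − v(n+1,m)v(n+1,m+1)) = a₂(v(n,m)v(n+1,m) − v(n,m+1)v(n+1,m+1)), and let u⁰, u¹ : ℤ² → ℂ satisfy a₁ + u¹(n,m) − u⁰(n+1,m) = a₁v(n+1,m)/v(n,m), a₁ + u⁰(n,m) − u¹(n+1,m) = a₁v(n,m)/v(n+1,m), a₂ + u¹(n,m) − u⁰(n,m+1) = a₂v(n,m+1)/v(n,m), a₂ + u⁰(n,m) − u¹(n,m+1) = a₂v(n,m)/v(n,m+1). Then u⁰ satisfies the discrete KdV equation (a₁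 + a₂ + u⁰(n,m) − u⁰(n+1,m+1))(a₁ − a₂ + u⁰(n,m+1) − u⁰(n+1,m)) = a₁² − a₂². -/
/-- The `𝒩 = 2` Miura maps transform a nowhere-zero solution of the discrete modified
KdV equation into a solution `u⁰` of the discrete KdV equation. -/
theorem stmt_16 (a₁ a₂ : ℂ) (v u0 u1 : ℤ → ℤ → ℂ)
    (hv0 : ∀ n m : ℤ, v n m ≠ 0)
    (hmKdV : ∀ n m : ℤ,
      a₁ * (v n m * v n (m+1) - v (n+1) m * v (n+1) (m+1))
        = a₂ * (v n m * v (n+1) m - v n (m+1) * v (n+1) (m+1)))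
    (hM1 : ∀ n m : ℤ, a₁ + u1 n m - u0 (n+1) m = a₁ * v (n+1) m / v n m)
    (hM2 : ∀ n m : ℤ, a₁ + u0 n m - u1 (n+1) m = a₁ * v n m / v (n+1) m)
    (hM3 : ∀ n m : ℤ, a₂ + u1 n m - u0 n (m+1) = a₂ * v n (m+1) / v n m)
    (hM4 : ∀ n m : ℤ, a₂ + u0 n m - u1 n (m+1) = a₂ * v n m / v n (m+1)) :
    ∀ n m : ℤ,
      (a₁ + a₂ + u0 n m - u0 (n+1) (m+1)) * (a₁ - a₂ + u0 n (m+1) - u0 (n+1) m)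
        = a₁^2 - a₂^2 := by
  intro n m
  have hY := hv0 n (m+1)
  have hW := hv0 (n+1) (m+1)
  have h1 := hM4 n m
  have h2 := hM1 n (m+1)
  have h3 := hM2 n (m+1)
  have h4 := hM4 (n+1) m
  have hk := hmKdV n m
  have hP : (a₁ + a₂ + u0 n m - u0 (n+1) (m+1)) * v n (m+1)
      = a₂ * v n m + a₁ * v (n+1) (m+1) := by
    have e1 : (a₂ + u0 n m - u1 n (m+1)) * v n (m+1) = a₂ * v n m := by
      rw [h1]; field_simp
    have e2 : (a₁ + u1 n (m+1) - u0 (n+1) (m+1)) * v n (m+1) = a₁ * v (n+1) (m+1) := by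
      rw [h2]; field_simp
    linear_combination e1 + e2
  have hQ : (a₁ - a₂ + u0 n (m+1) - u0 (n+1) m) * v (n+1) (m+1)
      = a₁ * v n (m+1) - a₂ * v (n+1) m := by
    have e3 : (a₁ + u0 n (m+1) - u1 (n+1) (m+1)) * v (n+1) (m+1) = a₁ * v n (m+1) := by
      rw [h3]; field_simp
    have e4 : (a₂ + u0 (n+1) m - u1 (n+1) (m+1)) * v (n+1) (m+1) = a₂ * v (n+1) m := by
      rw [h4]; field_simp
    linear_combination e3 - e4
  have hne : v n (m+1) * v (n+1) (m+1) ≠ 0 := mul_ne_zero hY hW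
  apply mul_right_cancel₀ hne
  linear_combination (a₁ - a₂ + u0 n (m+1) - u0 (n+1) m) * v (n+1) (m+1) * hP
    + (a₂ * v n m + a₁ * v (n+1) (m+1)) * hQ + a₂ * hk
end
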